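/- arXiv:1607.04527 — 9 statements merged into one kernel-verified Lean document; each statement's English description precedes it below -/
import Mathlib

section
/- Let f be a monotone submodular function with f(∅)=0 and curvature c_f, and let ε ∈ (0,1). Define ℓ(S) = (1-ε/2)·∑_{e∈S}(f(E)-f(E\{e})) and g(S) = f(S) - ℓ(S). Then g is a nonnegative monotone submodular function. -/
/-!
Submodularity makes the marginal gain of `e` smallest at the top, so the top marginal
`f E - f (E \ {e})` is at most the gain of adding `e` to any set. Summing, the weight of `T \ S`
under top marginals is at most `f T - f S` for `S ⊆ T`; as these weights are nonnegative and are
scaled by `1 - ε/2 ≤ 1`, `g` is monotone, and `g ∅ = 0` gives nonnegativity. Subtracting the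
modular function `ℓ` does not affect submodularity.
-/

open Finset

section Submodular

variable {E : Type*} [DecidableEq E] (f : Finset E → ℝ)

theorem marginal_antitone_of_submodular
    (hsub : ∀ S T : Finset E, f S + f T ≥ f (S ∩ T) + f (S ∪ T))
    {a : E} {A B : Finset E} (hBA : B ⊆ A) (ha : a ∉ A) :
    f (insert a A) - f A ≤ f (insert a B) - f B := by
  have hinter : A ∩ insert a B = B := by
    rw [inter_insert_of_notMem ha, inter_eq_right.mpr hBA]
  have hunion : A ∪ insert a B = insert a A := by
    rw [union_insert, union_eq_left.mpr hBA]
  have := hsub A (insert a B)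
  rw [hinter, hunion] at this
  linarith

theorem submodular_sub_mul_sum
    (hsub : ∀ S T : Finset E, f S + f T ≥ f (S ∩ T) + f (S ∪ T)) (c : ℝ) (w : E → ℝ)
    (S T : Finset E) :
    (f S - c * ∑ e ∈ S, w e) + (f T - c * ∑ e ∈ T, w e) ≥
      (f (S ∩ T) - c * ∑ e ∈ S ∩ T, w e) + (f (S ∪ T) - c * ∑ e ∈ S ∪ T, w e) := by
  have hsum := congrArg (c * ·) (sum_union_inter (s₁ := S) (s₂ := T) (f := w))
  simp only [mul_add] at hsum
  linarith [hsub S T]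

variable [Fintype E]

def topMarginal (e : E) : ℝ := f univ - f (univ.erase e)

variable {f}

theorem topMarginal_nonneg (hmono : ∀ S T : Finset E, S ⊆ T → f S ≤ f T) (e : E) :
    0 ≤ topMarginal f e :=
  sub_nonneg.mpr (hmono _ _ (erase_subset e univ))

theorem topMarginal_le_marginal
    (hsub : ∀ S T : Finset E, f S + f T ≥ f (S ∩ T) + f (S ∪ T))
    {a : E} {B : Finset E} (ha : a ∉ B) :
    topMarginal f a ≤ f (insert a B) - f B := by
  have := marginal_antitone_of_submodular f hsub (A := univ.erase a)
    (fun x hx => mem_erase.mpr ⟨fun h => ha (h ▸ hx), mem_univ x⟩) (notMem_erase a univ)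
  rwa [insert_erase (mem_univ a)] at this

theorem sum_topMarginal_le_of_disjoint
    (hsub : ∀ S T : Finset E, f S + f T ≥ f (S ∩ T) + f (S ∪ T))
    (S : Finset E) {D : Finset E} (hD : Disjoint D S) :
    ∑ e ∈ D, topMarginal f e ≤ f (S ∪ D) - f S := by
  induction D using Finset.induction_on with
  | empty => simp
  | @insert a D haD ih =>
    rw [disjoint_insert_left] at hD
    have haSD : a ∉ S ∪ D := by simp [hD.1, haD]
    have hstep := topMarginal_le_marginal hsub haSD
    rw [sum_insert haD, union_insert]
    linarith [ih hD.2]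

theorem sub_mul_sum_topMarginal_mono
    (hsub : ∀ S T : Finset E, f S + f T ≥ f (S ∩ T) + f (S ∪ T))
    (hmono : ∀ S T : Finset E, S ⊆ T → f S ≤ f T)
    {c : ℝ} (hc : c ≤ 1) {S T : Finset E} (hST : S ⊆ T) :
    f S - c * ∑ e ∈ S, topMarginal f e ≤ f T - c * ∑ e ∈ T, topMarginal f e := by
  have hgain := sum_topMarginal_le_of_disjoint hsub S (sdiff_disjoint : Disjoint (T \ S) S)
  rw [union_sdiff_of_subset hST] at hgain
  have hnonneg : 0 ≤ ∑ e ∈ T \ S, topMarginal f e :=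
    sum_nonneg fun e _ => topMarginal_nonneg hmono e
  have hscaled := mul_le_of_le_one_left hnonneg hc
  rw [← sum_sdiff hST, mul_add]
  linarith

end Submodular

theorem g_nonneg_monotone_submodular_general
    {E : Type*} [Fintype E] [DecidableEq E]
    (f : Finset E → ℝ)
    (hmono : ∀ S T : Finset E, S ⊆ T → f S ≤ f T)
    (hsub : ∀ S T : Finset E, f S + f T ≥ f (S ∩ T) + f (S ∪ T))
    (hempty : f ∅ = 0)
    (ε : ℝ) (hε : ε ∈ Set.Ioo (0:ℝ) 1)
    (ℓ g : Finset E → ℝ)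
    (hℓ : ∀ S : Finset E,
      ℓ S = (1 - ε/2) * ∑ e ∈ S, (f Finset.univ - f (Finset.univ.erase e)))
    (hg : ∀ S : Finset E, g S = f S - ℓ S) :
    (∀ S : Finset E, 0 ≤ g S) ∧
    (∀ S T : Finset E, S ⊆ T → g S ≤ g T) ∧
    (∀ S T : Finset E, g S + g T ≥ g (S ∩ T) + g (S ∪ T)) := by
  have hg' (S : Finset E) : g S = f S - (1 - ε/2) * ∑ e ∈ S, topMarginal f e := by
    rw [hg, hℓ]; rfl
  have hmono_g (S T : Finset E) (hST : S ⊆ T) : g S ≤ g T := by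
    rw [hg', hg']
    exact sub_mul_sum_topMarginal_mono hsub hmono (by linarith [hε.1]) hST
  refine ⟨fun S => ?_, hmono_g, fun S T => ?_⟩
  · have hg_empty : g ∅ = 0 := by simp [hg', hempty]
    exact hg_empty ▸ hmono_g ∅ S (empty_subset S)
  · simp only [hg']
    exact submodular_sub_mul_sum f hsub _ _ S T

theorem g_nonneg_monotone_submodular
    {E : Type*} [Fintype E] [DecidableEq E] [Nonempty E]
    (f : Finset E → ℝ)
    (hmono : ∀ S T : Finset E, S ⊆ T → f S ≤ f T)
    (hsub : ∀ S T : Finset E, f S + f T ≥ f (S ∩ T) + f (S ∪ T))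
    (hempty : f ∅ = 0)
    (hpos : ∀ e : E, 0 < f {e})
    (ε : ℝ) (hε : ε ∈ Set.Ioo (0:ℝ) 1)
    (ℓ g : Finset E → ℝ)
    (hℓ : ∀ S : Finset E,
      ℓ S = (1 - ε/2) * ∑ e ∈ S, (f Finset.univ - f (Finset.univ.erase e)))
    (hg : ∀ S : Finset E, g S = f S - ℓ S) :
    (∀ S : Finset E, 0 ≤ g S) ∧
    (∀ S T : Finset E, S ⊆ T → g S ≤ g T) ∧
    (∀ S T : Finset E, g S + g T ≥ g (S ∩ T) + g (S ∪ T)) :=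
  g_nonneg_monotone_submodular_general f hmono hsub hempty ε hε ℓ g hℓ hg
end

section
/- Let f be a monotone submodular function with f(∅)=0 and curvature c_f < 1, ε ∈ (0,1), ℓ(S) = (1-ε/2)·∑_{e∈S}(f(E)-f(E\{e})), and g = f - ℓ. Then the curvature of g satisfies c_g ≤ 1 - ε(1-c_f)/2. -/
/-! Subtracting the modular function `ℓ` lowers each top marginal `f(E) - f(E ∖ {e})` by exactly
`ℓ({e}) = (1 - ε/2)·(f(E) - f(E ∖ {e}))`, so the top marginal of `g` is `ε/2` times that of `f`.
Since `ℓ ≥ 0` by monotonicity, `g({e}) ≤ f({e})`; hence every ratio `g_{E∖{e}}({e}) / g({e})` is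
at least `ε/2 · f_{E∖{e}}({e}) / f({e}) ≥ ε/2 · (1 - c_f)`. -/

open Finset

section

variable {E : Type*} [Fintype E] [DecidableEq E]

def marginalAtTop (h : Finset E → ℝ) (e : E) : ℝ := h univ - h (univ.erase e)

theorem marginalAtTop_nonneg {f : Finset E → ℝ} (hmono : ∀ S T : Finset E, S ⊆ T → f S ≤ f T)
    (e : E) : 0 ≤ marginalAtTop f e :=
  sub_nonneg.2 (hmono _ _ (erase_subset _ _))

theorem marginalAtTop_sub_sum (f : Finset E → ℝ) (w : E → ℝ) (e : E) :
    marginalAtTop (fun S => f S - ∑ x ∈ S, w x) e = marginalAtTop f e - w e := by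
  simp only [marginalAtTop, ← sum_erase_add _ w (mem_univ e)]
  ring

theorem mul_marginalAtTop_div_le {f g : Finset E → ℝ}
    (hmono : ∀ S T : Finset E, S ⊆ T → f S ≤ f T) {δ : ℝ} (hδ0 : 0 ≤ δ) (hδ1 : δ ≤ 1)
    (hg : ∀ S, g S = f S - (1 - δ) * ∑ x ∈ S, marginalAtTop f x) {e : E} (hge : 0 < g {e}) :
    δ * (marginalAtTop f e / f {e}) ≤ marginalAtTop g e / g {e} := by
  have ha := marginalAtTop_nonneg hmono e
  have hg' : g = fun S => f S - ∑ x ∈ S, (1 - δ) * marginalAtTop f x := by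
    funext S
    rw [hg, mul_sum]
  have hmarg : marginalAtTop g e = δ * marginalAtTop f e := by
    rw [hg', marginalAtTop_sub_sum]
    ring
  have hsingle : g {e} ≤ f {e} := by
    rw [hg, sum_singleton]
    exact sub_le_self _ (mul_nonneg (by linarith) ha)
  calc δ * (marginalAtTop f e / f {e})
      ≤ δ * (marginalAtTop f e / g {e}) := by gcongr
    _ = marginalAtTop g e / g {e} := by rw [hmarg, mul_div_assoc]

end

theorem curvature_of_g_bound_general
    {E : Type*} [Fintype E] [DecidableEq E] [Nonempty E]
    (f : Finset E → ℝ)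
    (hmono : ∀ S T : Finset E, S ⊆ T → f S ≤ f T)
    (ε : ℝ) (hε : ε ∈ Set.Ioo (0:ℝ) 1)
    (ℓ g : Finset E → ℝ)
    (hℓ : ∀ S : Finset E,
      ℓ S = (1 - ε/2) * ∑ e ∈ S, (f Finset.univ - f (Finset.univ.erase e)))
    (hg : ∀ S : Finset E, g S = f S - ℓ S)
    (hgpos : ∀ e : E, 0 < g {e})
    (cf cg : ℝ)
    (hcf : cf = 1 - Finset.univ.inf' Finset.univ_nonempty
      (fun e => (f Finset.univ - f (Finset.univ.erase e)) / f {e}))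
    (hcg : cg = 1 - Finset.univ.inf' Finset.univ_nonempty
      (fun e => (g Finset.univ - g (Finset.univ.erase e)) / g {e})) :
    cg ≤ 1 - ε * (1 - cf) / 2 := by
  obtain ⟨hε0, hε1⟩ := hε
  have hg' : ∀ S, g S = f S - (1 - ε / 2) * ∑ x ∈ S, marginalAtTop f x := fun S => by
    rw [hg, hℓ]
    rfl
  have hratio (e : E) := mul_marginalAtTop_div_le hmono (by linarith) (by linarith) hg' (hgpos e)
  have hinf : ε / 2 * univ.inf' univ_nonempty (fun e => marginalAtTop f e / f {e})
      ≤ univ.inf' univ_nonempty (fun e => marginalAtTop g e / g {e}) :=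
    le_inf' _ _ fun e _ => (mul_le_mul_of_nonneg_left (inf'_le _ (mem_univ e))
      (by linarith)).trans (hratio e)
  unfold marginalAtTop at hinf
  rw [hcf, hcg]
  linarith

theorem curvature_of_g_bound
    {E : Type*} [Fintype E] [DecidableEq E] [Nonempty E]
    (f : Finset E → ℝ)
    (hmono : ∀ S T : Finset E, S ⊆ T → f S ≤ f T)
    (hsub : ∀ S T : Finset E, f S + f T ≥ f (S ∩ T) + f (S ∪ T))
    (hempty : f ∅ = 0)
    (hpos : ∀ e : E, 0 < f {e})
    (ε : ℝ) (hε : ε ∈ Set.Ioo (0:ℝ) 1)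
    (ℓ g : Finset E → ℝ)
    (hℓ : ∀ S : Finset E,
      ℓ S = (1 - ε/2) * ∑ e ∈ S, (f Finset.univ - f (Finset.univ.erase e)))
    (hg : ∀ S : Finset E, g S = f S - ℓ S)
    (hgpos : ∀ e : E, 0 < g {e})
    (cf cg : ℝ)
    (hcf : cf = 1 - Finset.univ.inf' Finset.univ_nonempty
      (fun e => (f Finset.univ - f (Finset.univ.erase e)) / f {e}))
    (hcf1 : cf < 1)
    (hcg : cg = 1 - Finset.univ.inf' Finset.univ_nonempty
      (fun e => (g Finset.univ - g (Finset.univ.erase e)) / g {e})) :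
    cg ≤ 1 - ε * (1 - cf) / 2 :=
  curvature_of_g_bound_general f hmono ε hε ℓ g hℓ hg hgpos cf cg hcf hcg
end

section
/- Let f be a monotone submodular function with f(∅)=0 and curvature c_f, ε ∈ (0,1), and ℓ(S) = (1-ε/2)·∑_{e∈S}(f(E)-f(E\{e})). Then for every S ⊆ E, ℓ(S) ≥ (1 - c_f - ε/2)·f(S). -/
/-!
Subadditivity of `f` (submodularity with `f ∅ = 0`) gives `f S ≤ ∑ e ∈ S, f {e}`, and by the
definition of the curvature each top marginal `f E - f (E \ {e})` is at least `(1 - c_f) f {e}`;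
hence `∑ e ∈ S, (f E - f (E \ {e})) ≥ (1 - c_f) f S`. Multiplying by `1 - ε/2` loses at most
`(ε/2)(1 - c_f) f S ≤ (ε/2) f S`, because `0 ≤ 1 - c_f ≤ 1` and `f S ≥ 0`.
-/

open Finset

section Submodular

variable {α : Type*} {f : Finset α → ℝ}

lemma nonneg_of_monotone (hmono : Monotone f) (hempty : f ∅ = 0) (S : Finset α) : 0 ≤ f S :=
  hempty ▸ hmono (empty_subset S)

variable [DecidableEq α]

lemma le_add_of_submodular_of_disjoint
    (hsub : ∀ S T : Finset α, f S + f T ≥ f (S ∩ T) + f (S ∪ T)) (hempty : f ∅ = 0)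
    {S T : Finset α} (hST : Disjoint S T) : f (S ∪ T) ≤ f S + f T := by
  have h := hsub S T
  rw [disjoint_iff_inter_eq_empty.mp hST, hempty] at h
  linarith

lemma le_sum_singleton_of_submodular
    (hsub : ∀ S T : Finset α, f S + f T ≥ f (S ∩ T) + f (S ∪ T)) (hempty : f ∅ = 0)
    (S : Finset α) : f S ≤ ∑ e ∈ S, f {e} := by
  induction S using Finset.induction_on with
  | empty => simp [hempty]
  | insert a s ha ih =>
    have h := le_add_of_submodular_of_disjoint hsub hempty (disjoint_singleton_left.mpr ha)
    rw [sum_insert ha, insert_eq]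
    linarith

lemma sub_erase_le_singleton_of_submodular
    (hsub : ∀ S T : Finset α, f S + f T ≥ f (S ∩ T) + f (S ∪ T)) (hempty : f ∅ = 0)
    {T : Finset α} {e : α} (he : e ∈ T) : f T - f (T.erase e) ≤ f {e} := by
  have h := le_add_of_submodular_of_disjoint hsub hempty
    (disjoint_singleton_left.mpr (notMem_erase e T))
  rw [← insert_eq, insert_erase he] at h
  linarith

variable [Fintype α] [Nonempty α]

/-- `1 - c_f`, where `c_f` is the curvature of `f`. -/
noncomputable def minMarginalRatio (f : Finset α → ℝ) : ℝ :=
  univ.inf' univ_nonempty fun e => (f univ - f (univ.erase e)) / f {e}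

lemma minMarginalRatio_nonneg (hmono : Monotone f) (hempty : f ∅ = 0) :
    0 ≤ minMarginalRatio f :=
  le_inf' _ _ fun e _ =>
    div_nonneg (sub_nonneg.2 (hmono (erase_subset e univ))) (nonneg_of_monotone hmono hempty _)

lemma minMarginalRatio_le_one (hmono : Monotone f)
    (hsub : ∀ S T : Finset α, f S + f T ≥ f (S ∩ T) + f (S ∪ T)) (hempty : f ∅ = 0) :
    minMarginalRatio f ≤ 1 := by
  obtain ⟨e⟩ := ‹Nonempty α›
  exact (inf'_le _ (mem_univ e)).trans <| div_le_one_of_le₀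
    (sub_erase_le_singleton_of_submodular hsub hempty (mem_univ e))
    (nonneg_of_monotone hmono hempty _)

lemma minMarginalRatio_mul_singleton_le (hmono : Monotone f) (hempty : f ∅ = 0) (e : α) :
    minMarginalRatio f * f {e} ≤ f univ - f (univ.erase e) := by
  have h : minMarginalRatio f ≤ (f univ - f (univ.erase e)) / f {e} := inf'_le _ (mem_univ e)
  rcases (nonneg_of_monotone hmono hempty {e}).eq_or_lt with hzero | hpos
  · rw [← hzero, mul_zero]; exact sub_nonneg.2 (hmono (erase_subset e univ))
  · exact (le_div_iff₀ hpos).mp h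

lemma minMarginalRatio_mul_le_sum_marginal (hmono : Monotone f)
    (hsub : ∀ S T : Finset α, f S + f T ≥ f (S ∩ T) + f (S ∪ T)) (hempty : f ∅ = 0)
    (S : Finset α) :
    minMarginalRatio f * f S ≤ ∑ e ∈ S, (f univ - f (univ.erase e)) :=
  calc minMarginalRatio f * f S ≤ minMarginalRatio f * ∑ e ∈ S, f {e} :=
        mul_le_mul_of_nonneg_left (le_sum_singleton_of_submodular hsub hempty S)
          (minMarginalRatio_nonneg hmono hempty)
    _ = ∑ e ∈ S, minMarginalRatio f * f {e} := mul_sum _ _ _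
    _ ≤ ∑ e ∈ S, (f univ - f (univ.erase e)) :=
        sum_le_sum fun e _ => minMarginalRatio_mul_singleton_le hmono hempty e

end Submodular

theorem ell_ge_curvature_fraction_general
    {E : Type*} [Fintype E] [DecidableEq E] [Nonempty E]
    (f : Finset E → ℝ)
    (hmono : ∀ S T : Finset E, S ⊆ T → f S ≤ f T)
    (hsub : ∀ S T : Finset E, f S + f T ≥ f (S ∩ T) + f (S ∪ T))
    (hempty : f ∅ = 0)
    (ε : ℝ) (hε : ε ∈ Set.Ioo (0:ℝ) 1)
    (ℓ : Finset E → ℝ)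
    (hℓ : ∀ S : Finset E,
      ℓ S = (1 - ε/2) * ∑ e ∈ S, (f Finset.univ - f (Finset.univ.erase e)))
    (cf : ℝ)
    (hcf : cf = 1 - Finset.univ.inf' Finset.univ_nonempty
      (fun e => (f Finset.univ - f (Finset.univ.erase e)) / f {e})) :
    ∀ S : Finset E, ℓ S ≥ (1 - cf - ε/2) * f S := by
  intro S
  obtain ⟨hε0, hε1⟩ := hε
  have hmono' : Monotone f := fun S T => hmono S T
  have hκ1 := minMarginalRatio_le_one hmono' hsub hempty
  have hfS := nonneg_of_monotone hmono' hempty S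
  rw [hℓ, show cf = 1 - minMarginalRatio f from hcf]
  calc (1 - (1 - minMarginalRatio f) - ε/2) * f S
      ≤ (1 - ε/2) * (minMarginalRatio f * f S) := by
        nlinarith [mul_nonneg (mul_nonneg hε0.le (sub_nonneg.2 hκ1)) hfS]
    _ ≤ (1 - ε/2) * ∑ e ∈ S, (f univ - f (univ.erase e)) :=
        mul_le_mul_of_nonneg_left (minMarginalRatio_mul_le_sum_marginal hmono' hsub hempty S)
          (by linarith)

theorem ell_ge_curvature_fraction
    {E : Type*} [Fintype E] [DecidableEq E] [Nonempty E]
    (f : Finset E → ℝ)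
    (hmono : ∀ S T : Finset E, S ⊆ T → f S ≤ f T)
    (hsub : ∀ S T : Finset E, f S + f T ≥ f (S ∩ T) + f (S ∪ T))
    (hempty : f ∅ = 0)
    (hpos : ∀ e : E, 0 < f {e})
    (ε : ℝ) (hε : ε ∈ Set.Ioo (0:ℝ) 1)
    (ℓ : Finset E → ℝ)
    (hℓ : ∀ S : Finset E,
      ℓ S = (1 - ε/2) * ∑ e ∈ S, (f Finset.univ - f (Finset.univ.erase e)))
    (cf : ℝ)
    (hcf : cf = 1 - Finset.univ.inf' Finset.univ_nonempty
      (fun e => (f Finset.univ - f (Finset.univ.erase e)) / f {e})) :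
    ∀ S : Finset E, ℓ S ≥ (1 - cf - ε/2) * f S :=
  ell_ge_curvature_fraction_general f hmono hsub hempty ε hε ℓ hℓ cf hcf
end

section
/- Let f: 2^E → ℝ≥0 be monotone submodular with multilinear extension F, and let x, y ∈ [0,1]^E and ε ≥ 0 be such that x + ε·y ∈ [0,1]^E. Then F(x + ε·y) - F(x) ≥ ε · ∑_{e∈E} y(e) · (F((x+ε·y) ∨ 1_e) - F(x+ε·y)) / 1, where the sum on the right can be written as ε·∑_e y(e)·E[f_{R(x+εy)}(e)] with R(z) the random set including each e independently with probability z(e). -/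
/-!
The multilinear extension `F_g` of a set function `g` is affine in each coordinate, and its
partial derivative in `w e` is the multilinear extension of the discrete derivative
`Δ_e g S = g (S ∪ {e}) - g (S \ {e})`. Submodularity of `f` makes every `Δ_e f` antitone, so
`∂_e F_f` decreases along the cube. Moving from `x` to `z = x + ε y` one coordinate at a time,
each step therefore gains at least `(z e - x e) ∂_e F_f(z)`. Finally the expected marginal gain
`E[f_{R(z)}(e)]` equals `(1 - z e) ∂_e F_f(z)`, which is at most `∂_e F_f(z)` because `f` is
monotone.
-/

open Finset

section MultilinearExtension

variable {E : Type*} [DecidableEq E]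

def discreteDeriv (g : Finset E → ℝ) (e : E) (S : Finset E) : ℝ :=
  g (insert e S) - g (S.erase e)

lemma discreteDeriv_nonneg {g : Finset E → ℝ} (hg : Monotone g) (e : E) :
    0 ≤ discreteDeriv g e :=
  fun S => sub_nonneg.2 (hg ((erase_subset e S).trans (subset_insert e S)))

lemma discreteDeriv_antitone {g : Finset E → ℝ}
    (hg : ∀ S T : Finset E, g S + g T ≥ g (S ∩ T) + g (S ∪ T)) (e : E) :
    Antitone (discreteDeriv g e) := by
  intro S T hST
  have hinter : insert e S ∩ T.erase e = S.erase e := by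
    ext a
    have := @hST a
    simp only [mem_inter, mem_insert, mem_erase]
    tauto
  have hunion : insert e S ∪ T.erase e = insert e T := by
    ext a
    have := @hST a
    simp only [mem_union, mem_insert, mem_erase]
    tauto
  have := hg (insert e S) (T.erase e)
  rw [hinter, hunion] at this
  simp only [discreteDeriv]
  linarith

variable [Fintype E]

noncomputable def sampleProb (w : E → ℝ) (S : Finset E) : ℝ :=
  (∏ a ∈ S, w a) * ∏ a ∈ Sᶜ, (1 - w a)

/-- For `e ∉ S`, the probability that `R(w) \ {e} = S`; it does not depend on `w e`. -/
noncomputable def sampleProbErase (w : E → ℝ) (e : E) (S : Finset E) : ℝ :=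
  (∏ a ∈ S, w a) * ∏ a ∈ (insert e S)ᶜ, (1 - w a)

noncomputable def multilinearExt (g : Finset E → ℝ) (w : E → ℝ) : ℝ :=
  ∑ S, sampleProb w S * g S

lemma sampleProb_insert (w : E → ℝ) {e : E} {S : Finset E} (h : e ∉ S) :
    sampleProb w (insert e S) = w e * sampleProbErase w e S := by
  rw [sampleProb, sampleProbErase, prod_insert h]
  ring

lemma sampleProb_of_notMem (w : E → ℝ) {e : E} {S : Finset E} (h : e ∉ S) :
    sampleProb w S = (1 - w e) * sampleProbErase w e S := by
  rw [sampleProb, sampleProbErase, compl_insert, ← mul_prod_erase Sᶜ _ (mem_compl.2 h)]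
  ring

lemma sampleProb_nonneg {w : E → ℝ} (h0 : 0 ≤ w) (h1 : w ≤ 1) (S : Finset E) :
    0 ≤ sampleProb w S :=
  mul_nonneg (prod_nonneg fun a _ => h0 a) (prod_nonneg fun a _ => sub_nonneg.2 (h1 a))

lemma sampleProbErase_update (w : E → ℝ) {e : E} (t : ℝ) {S : Finset E} (h : e ∉ S) :
    sampleProbErase (Function.update w e t) e S = sampleProbErase w e S := by
  unfold sampleProbErase
  congr 1
  · exact prod_congr rfl fun a ha => Function.update_of_ne (ne_of_mem_of_not_mem ha h) _ _
  · refine prod_congr rfl fun a ha => ?_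
    have hae : a ≠ e := fun hae => (mem_compl.1 ha) (hae ▸ mem_insert_self a S)
    rw [Function.update_of_ne hae]

lemma notMem_of_mem_powerset_erase {e : E} {S : Finset E} (hS : S ∈ (univ.erase e).powerset) :
    e ∉ S :=
  fun he => notMem_erase e univ (mem_powerset.1 hS he)

/-- Conditioning on whether `e ∈ R(w)`. -/
lemma multilinearExt_eq_sum_erase (g : Finset E → ℝ) (w : E → ℝ) (e : E) :
    multilinearExt g w = ∑ S ∈ (univ.erase e).powerset,
      (w e * g (insert e S) + (1 - w e) * g S) * sampleProbErase w e S := by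
  have huniv : (univ : Finset (Finset E)) = (insert e (univ.erase e)).powerset := by
    rw [insert_erase (mem_univ e), powerset_univ]
  rw [multilinearExt, huniv, sum_powerset_insert (notMem_erase e univ), ← sum_add_distrib]
  refine sum_congr rfl fun S hS => ?_
  have he := notMem_of_mem_powerset_erase hS
  rw [sampleProb_insert w he, sampleProb_of_notMem w he]
  ring

lemma multilinearExt_update_sub (g : Finset E → ℝ) (w : E → ℝ) (e : E) (t : ℝ) :
    multilinearExt g (Function.update w e t) - multilinearExt g w =
      (t - w e) * multilinearExt (discreteDeriv g e) w := by
  rw [multilinearExt_eq_sum_erase g _ e, multilinearExt_eq_sum_erase g w e,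
    multilinearExt_eq_sum_erase (discreteDeriv g e) w e, mul_sum, ← sum_sub_distrib]
  refine sum_congr rfl fun S hS => ?_
  have he := notMem_of_mem_powerset_erase hS
  simp only [Function.update_self, sampleProbErase_update w t he, discreteDeriv, insert_idem,
    erase_insert he, erase_eq_of_notMem he]
  ring

lemma multilinearExt_marginal (g : Finset E → ℝ) (w : E → ℝ) (e : E) :
    multilinearExt (fun S => g (insert e S) - g S) w =
      (1 - w e) * multilinearExt (discreteDeriv g e) w := by
  rw [multilinearExt_eq_sum_erase _ w e, multilinearExt_eq_sum_erase (discreteDeriv g e) w e,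
    mul_sum]
  refine sum_congr rfl fun S hS => ?_
  have he := notMem_of_mem_powerset_erase hS
  simp only [discreteDeriv, insert_idem, erase_insert he, erase_eq_of_notMem he]
  ring

lemma multilinearExt_neg (g : Finset E → ℝ) (w : E → ℝ) :
    multilinearExt (-g) w = -multilinearExt g w := by
  simp [multilinearExt, sum_neg_distrib]

lemma multilinearExt_nonneg {g : Finset E → ℝ} (hg : 0 ≤ g) {w : E → ℝ} (h0 : 0 ≤ w)
    (h1 : w ≤ 1) : 0 ≤ multilinearExt g w :=
  sum_nonneg fun S _ => mul_nonneg (sampleProb_nonneg h0 h1 S) (hg S)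

/-- Telescoping from `u` to `v` through the points `A.piecewise v u`. -/
lemma sum_mul_le_multilinearExt_sub (g : Finset E → ℝ) {u v : E → ℝ} (huv : u ≤ v) (c : E → ℝ)
    (hc : ∀ a m, u ≤ m → m ≤ v → c a ≤ multilinearExt (discreteDeriv g a) m) :
    ∑ a, (v a - u a) * c a ≤ multilinearExt g v - multilinearExt g u := by
  suffices h : ∀ A : Finset E,
      ∑ a ∈ A, (v a - u a) * c a ≤ multilinearExt g (A.piecewise v u) - multilinearExt g u by
    simpa using h univ
  intro A
  induction A using Finset.induction_on with
  | empty => simp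
  | insert a A ha ih =>
    have hum : u ≤ A.piecewise v u := by
      simpa only [piecewise_same] using A.piecewise_le_piecewise huv (le_refl u)
    have hmv : A.piecewise v u ≤ v := by
      simpa only [piecewise_same] using A.piecewise_le_piecewise (le_refl v) huv
    have hstep : (v a - u a) * c a ≤
        multilinearExt g ((insert a A).piecewise v u) - multilinearExt g (A.piecewise v u) := by
      rw [piecewise_insert, multilinearExt_update_sub, piecewise_eq_of_notMem _ _ _ ha]
      exact mul_le_mul_of_nonneg_left (hc a _ hum hmv) (sub_nonneg.2 (huv a))
    rw [sum_insert ha]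
    linarith

lemma multilinearExt_mono {g : Finset E → ℝ} (hg : Monotone g) {u v : E → ℝ} (hu : 0 ≤ u)
    (hv : v ≤ 1) (huv : u ≤ v) : multilinearExt g u ≤ multilinearExt g v := by
  have := sum_mul_le_multilinearExt_sub g huv 0 fun a m hum hmv =>
    multilinearExt_nonneg (discreteDeriv_nonneg hg a) (hu.trans hum) (hmv.trans hv)
  simp only [Pi.zero_apply, mul_zero, sum_const_zero] at this
  linarith

lemma multilinearExt_anti {g : Finset E → ℝ} (hg : Antitone g) {u v : E → ℝ} (hu : 0 ≤ u)
    (hv : v ≤ 1) (huv : u ≤ v) : multilinearExt g v ≤ multilinearExt g u := by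
  have := multilinearExt_mono hg.neg hu hv huv
  rw [← Pi.neg_def, multilinearExt_neg, multilinearExt_neg] at this
  linarith

end MultilinearExtension

theorem multilinear_marginal_gain_lower_bound_general
    {E : Type*} [Fintype E] [DecidableEq E]
    (f : Finset E → ℝ)
    (hmono : ∀ S T : Finset E, S ⊆ T → f S ≤ f T)
    (hsub : ∀ S T : Finset E, f S + f T ≥ f (S ∩ T) + f (S ∪ T))
    (F : (E → ℝ) → ℝ)
    (hF : ∀ x : E → ℝ, F x = ∑ S : Finset E,
      f S * (∏ e ∈ S, x e) * ∏ e ∈ Sᶜ, (1 - x e))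
    (x y : E → ℝ) (ε : ℝ) (hε : 0 ≤ ε)
    (hx : ∀ e, x e ∈ Set.Icc (0:ℝ) 1)
    (hy : ∀ e, y e ∈ Set.Icc (0:ℝ) 1)
    (hxy : ∀ e, x e + ε * y e ∈ Set.Icc (0:ℝ) 1) :
    F (fun e => x e + ε * y e) - F x ≥
      ε * ∑ e : E, y e *
        (∑ S : Finset E, ((∏ a ∈ S, (x a + ε * y a)) *
          ∏ a ∈ Sᶜ, (1 - (x a + ε * y a))) * (f (insert e S) - f S)) := by
  let z : E → ℝ := fun e => x e + ε * y e
  have hF_eq : ∀ w, F w = multilinearExt f w := fun w => by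
    rw [hF]
    exact sum_congr rfl fun S _ => by rw [sampleProb]; ring
  have hxz : x ≤ z := fun e => le_add_of_nonneg_right (mul_nonneg hε (hy e).1)
  have hz0 : 0 ≤ z := fun e => (hxy e).1
  have hz1 : z ≤ 1 := fun e => (hxy e).2
  have hgain := sum_mul_le_multilinearExt_sub f hxz (fun e => multilinearExt (discreteDeriv f e) z)
    fun e m hxm hmz => multilinearExt_anti (discreteDeriv_antitone hsub e)
      (fun b => (hx b).1.trans (hxm b)) hz1 hmz
  rw [hF_eq, hF_eq, ge_iff_le, mul_sum]
  refine le_trans (sum_le_sum fun e _ => ?_) hgain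
  change ε * (y e * multilinearExt (fun S => f (insert e S) - f S) z) ≤ (z e - x e) * _
  have hderiv := multilinearExt_nonneg (discreteDeriv_nonneg hmono e) hz0 hz1
  have hgain_e : 0 ≤ ε * y e * z e := mul_nonneg (mul_nonneg hε (hy e).1) (hz0 e)
  rw [multilinearExt_marginal, show z e - x e = ε * y e by simp [z]]
  nlinarith

theorem multilinear_marginal_gain_lower_bound
    {E : Type*} [Fintype E] [DecidableEq E]
    (f : Finset E → ℝ) (hnn : ∀ S, 0 ≤ f S)
    (hmono : ∀ S T : Finset E, S ⊆ T → f S ≤ f T)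
    (hsub : ∀ S T : Finset E, f S + f T ≥ f (S ∩ T) + f (S ∪ T))
    (F : (E → ℝ) → ℝ)
    (hF : ∀ x : E → ℝ, F x = ∑ S : Finset E,
      f S * (∏ e ∈ S, x e) * ∏ e ∈ Sᶜ, (1 - x e))
    (x y : E → ℝ) (ε : ℝ) (hε : 0 ≤ ε)
    (hx : ∀ e, x e ∈ Set.Icc (0:ℝ) 1)
    (hy : ∀ e, y e ∈ Set.Icc (0:ℝ) 1)
    (hxy : ∀ e, x e + ε * y e ∈ Set.Icc (0:ℝ) 1) :
    F (fun e => x e + ε * y e) - F x ≥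
      ε * ∑ e : E, y e *
        (∑ S : Finset E, ((∏ a ∈ S, (x a + ε * y a)) *
          ∏ a ∈ Sᶜ, (1 - (x a + ε * y a))) * (f (insert e S) - f S)) :=
  multilinear_marginal_gain_lower_bound_general f hmono hsub F hF x y ε hε hx hy hxy
end

section
/- The budget allocation objective f(S) = ∑_{b∈B} (1 - ∏_{a∈Γ(b)} p(a)^{|S ∩ E_a|}) is a monotone submodular function on 2^E. -/
/-! For each `b`, the product `∏ a ∈ Γ b, p a ^ |S ∩ E_a|` is antitone in `S`, and since
`S ↦ |S ∩ E_a|` is modular, it is multiplicatively modular: its values `x, y` at `S, T` and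
`z, w` at `S ∩ T, S ∪ T` satisfy `z * w = x * y` with `x, y ≤ z`. For nonnegative numbers this
forces `x + y ≤ z + w`, so each summand `1 - ∏ …` is monotone and submodular, and so is the sum. -/

open Finset

theorem add_le_add_of_mul_eq_mul {R : Type*} [CommRing R] [LinearOrder R] [IsStrictOrderedRing R]
    {x y z w : R} (hx : 0 ≤ x) (hw : 0 ≤ w) (hxz : x ≤ z) (hyz : y ≤ z) (h : z * w = x * y) :
    x + y ≤ z + w := by
  rcases hxz.lt_or_eq with hlt | rfl
  · have hz : 0 < z := hx.trans_lt hlt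
    -- `(z - x) * (z - y) ≥ 0` gives `z * (x + y) ≤ z ^ 2 + x * y = z * (z + w)`.
    refine le_of_mul_le_mul_left ?_ hz
    nlinarith [mul_nonneg (sub_nonneg.2 hlt.le) (sub_nonneg.2 hyz)]
  · nlinarith [mul_nonneg (sub_nonneg.2 hyz) hx]

section ProdPowCardInter

variable {ι α : Type*} [DecidableEq α] (E : ι → Finset α)

theorem prod_pow_card_inter_mul_prod_pow_card_union {M : Type*} [CommMonoid M] {s : Finset ι}
    {p : ι → M} (S T : Finset α) :
    (∏ i ∈ s, p i ^ #((S ∩ T) ∩ E i)) * ∏ i ∈ s, p i ^ #((S ∪ T) ∩ E i) =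
      (∏ i ∈ s, p i ^ #(S ∩ E i)) * ∏ i ∈ s, p i ^ #(T ∩ E i) := by
  rw [← prod_mul_distrib, ← prod_mul_distrib]
  refine prod_congr rfl fun i _ => ?_
  rw [← pow_add, ← pow_add, inter_inter_distrib_right, union_inter_distrib_right,
    card_inter_add_card_union]

variable {R : Type*} [CommRing R] [LinearOrder R] [IsStrictOrderedRing R] {s : Finset ι} {p : ι → R}

theorem prod_pow_card_inter_nonneg (hp : ∀ i ∈ s, 0 ≤ p i) (S : Finset α) :
    0 ≤ ∏ i ∈ s, p i ^ #(S ∩ E i) :=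
  prod_nonneg fun i hi => pow_nonneg (hp i hi) _

theorem prod_pow_card_inter_anti (hp : ∀ i ∈ s, p i ∈ Set.Icc 0 1) {S T : Finset α}
    (hST : S ⊆ T) : ∏ i ∈ s, p i ^ #(T ∩ E i) ≤ ∏ i ∈ s, p i ^ #(S ∩ E i) :=
  prod_le_prod (fun i hi => pow_nonneg (hp i hi).1 _) fun i hi =>
    pow_le_pow_of_le_one (hp i hi).1 (hp i hi).2 (card_le_card (inter_subset_inter_right hST))

theorem prod_pow_card_inter_supermodular (hp : ∀ i ∈ s, p i ∈ Set.Icc 0 1) (S T : Finset α) :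
    ∏ i ∈ s, p i ^ #(S ∩ E i) + ∏ i ∈ s, p i ^ #(T ∩ E i) ≤
      ∏ i ∈ s, p i ^ #((S ∩ T) ∩ E i) + ∏ i ∈ s, p i ^ #((S ∪ T) ∩ E i) :=
  have hp₀ : ∀ i ∈ s, 0 ≤ p i := fun i hi => (hp i hi).1
  add_le_add_of_mul_eq_mul (prod_pow_card_inter_nonneg E hp₀ S)
    (prod_pow_card_inter_nonneg E hp₀ _) (prod_pow_card_inter_anti E hp inter_subset_left)
    (prod_pow_card_inter_anti E hp inter_subset_right)
    (prod_pow_card_inter_mul_prod_pow_card_union E S T)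

end ProdPowCardInter

theorem budget_allocation_monotone_submodular_general
    {A B : Type*} [DecidableEq A] [Fintype B]
    (Γ : B → Finset A) (p : A → ℝ) (hp : ∀ a, p a ∈ Set.Icc (0:ℝ) 1)
    (c : A → ℕ)
    (Egnd : Finset (A × ℕ))
    (f : Finset (A × ℕ) → ℝ)
    (hf : ∀ S : Finset (A × ℕ), f S = ∑ b : B,
      (1 - ∏ a ∈ Γ b, p a ^ (S ∩ ({a} ×ˢ Finset.Icc 1 (c a))).card)) :
    (∀ S T : Finset (A × ℕ), S ⊆ T → T ⊆ Egnd → f S ≤ f T) ∧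
    (∀ S T : Finset (A × ℕ), S ⊆ Egnd → T ⊆ Egnd →
      f S + f T ≥ f (S ∩ T) + f (S ∪ T)) := by
  set E : A → Finset (A × ℕ) := fun a => {a} ×ˢ Icc 1 (c a)
  have hpΓ : ∀ b, ∀ a ∈ Γ b, p a ∈ Set.Icc 0 1 := fun _ a _ => hp a
  refine ⟨fun S T hST _ => ?_, fun S T _ _ => ?_⟩
  · simp only [hf]
    exact sum_le_sum fun b _ => sub_le_sub_left (prod_pow_card_inter_anti E (hpΓ b) hST) 1
  · simp only [hf, ge_iff_le, ← sum_add_distrib]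
    exact sum_le_sum fun b _ => by
      linarith [prod_pow_card_inter_supermodular E (hpΓ b) S T]

theorem budget_allocation_monotone_submodular
    {A B : Type*} [Fintype A] [DecidableEq A] [Fintype B]
    (Γ : B → Finset A) (p : A → ℝ) (hp : ∀ a, p a ∈ Set.Icc (0:ℝ) 1)
    (c : A → ℕ)
    (Egnd : Finset (A × ℕ))
    (hE : Egnd = Finset.univ.biUnion (fun a => {a} ×ˢ Finset.Icc 1 (c a)))
    (f : Finset (A × ℕ) → ℝ)
    (hf : ∀ S : Finset (A × ℕ), f S = ∑ b : B,
      (1 - ∏ a ∈ Γ b, p a ^ (S ∩ ({a} ×ˢ Finset.Icc 1 (c a))).card)) :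
    (∀ S T : Finset (A × ℕ), S ⊆ T → T ⊆ Egnd → f S ≤ f T) ∧
    (∀ S T : Finset (A × ℕ), S ⊆ Egnd → T ⊆ Egnd →
      f S + f T ≥ f (S ∩ T) + f (S ∪ T)) :=
  budget_allocation_monotone_submodular_general Γ p hp c Egnd f hf
end

section
/- The curvature c_f of the budget allocation function f satisfies c_f ≤ 1 - min_{a∈A} min_{b∈B: a∈Γ(b)} p(a)^{c(a)-1} · ∏_{a'∈Γ(b)\{a}} p(a')^{c(a')}. -/
/-!
The budget allocation function only sees how many copies of each `a` a set contains, so it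
factors through `coverage`. Removing the copy `(a, i)` from the full ground set lowers the term of
each `b` with `a ∈ Γ b` by `(1 - p a) * p a ^ (c a - 1) * ∏_{a' ∈ Γ b, a' ≠ a} p a' ^ c a'`, while
`f {(a, i)}` is `1 - p a` times the number of such `b`. The ratio in the curvature is therefore the
mean of these products over `b`, which is at least their minimum.
-/

open Finset

theorem prod_pow_update_of_mem {M A : Type*} [CommMonoid M] [DecidableEq A] (p : A → M)
    {s : Finset A} {a : A} (ha : a ∈ s) (n : A → ℕ) (k : ℕ) :
    ∏ a' ∈ s, p a' ^ Function.update n a k a' = p a ^ k * ∏ a' ∈ s.erase a, p a' ^ n a' := by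
  rw [prod_congr rfl fun a' _ => Function.apply_update (fun a' m => p a' ^ m) n a k a',
    prod_update_of_mem ha, sdiff_singleton_eq_erase]

section Coverage

variable {A B : Type*} [Fintype B]

def coverage (Γ : B → Finset A) (p : A → ℝ) (n : A → ℕ) : ℝ :=
  ∑ b, (1 - ∏ a ∈ Γ b, p a ^ n a)

variable [DecidableEq A] (Γ : B → Finset A) (p : A → ℝ)

theorem coverage_single (a : A) :
    coverage Γ p (Pi.single a 1) = #{b | a ∈ Γ b} * (1 - p a) := by
  have hterm : ∀ b, 1 - ∏ a' ∈ Γ b, p a' ^ Pi.single a 1 a' = if a ∈ Γ b then 1 - p a else 0 := by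
    intro b
    split_ifs with hab <;> simp [Pi.single_apply, hab]
  simp only [coverage, hterm, ← sum_filter, sum_const, nsmul_eq_mul]

theorem coverage_sub_coverage_update_pred (n : A → ℕ) {a : A} (hn : n a ≠ 0) :
    coverage Γ p n - coverage Γ p (Function.update n a (n a - 1)) =
      (1 - p a) * ∑ b with a ∈ Γ b, p a ^ (n a - 1) * ∏ a' ∈ (Γ b).erase a, p a' ^ n a' := by
  have hterm : ∀ b, (1 - ∏ a' ∈ Γ b, p a' ^ n a') -
      (1 - ∏ a' ∈ Γ b, p a' ^ Function.update n a (n a - 1) a') =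
      if a ∈ Γ b then (1 - p a) * (p a ^ (n a - 1) * ∏ a' ∈ (Γ b).erase a, p a' ^ n a') else 0 := by
    intro b
    split_ifs with hab
    · rw [← mul_prod_erase (Γ b) (fun a' => p a' ^ n a') hab, prod_pow_update_of_mem p hab,
        ← pow_sub_one_mul hn]
      ring
    · simp only [Function.apply_update (fun a' m => p a' ^ m), prod_update_of_notMem hab]
      ring
  simp only [coverage, ← sum_sub_distrib, hterm, ← sum_filter, mul_sum]

end Coverage

section FiberCard

variable {α β : Type*} [DecidableEq α] [DecidableEq β] (t : α → Finset β)

def fiberCard (S : Finset (α × β)) (a : α) : ℕ := #(S ∩ ({a} ×ˢ t a))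

theorem fiberCard_singleton {a : α} {i : β} (hi : i ∈ t a) :
    fiberCard t {(a, i)} = Pi.single a 1 := by
  funext a'
  by_cases h : a' = a
  · subst h
    simp [fiberCard, hi]
  · simp [fiberCard, h]

theorem fiberCard_biUnion [Fintype α] :
    fiberCard t (univ.biUnion fun a => {a} ×ˢ t a) = fun a => #(t a) := by
  funext a
  rw [fiberCard, inter_eq_right.2 (subset_biUnion_of_mem _ (mem_univ a)), card_product,
    card_singleton, one_mul]

theorem fiberCard_erase {S : Finset (α × β)} {a : α} {i : β} (hS : (a, i) ∈ S) (hi : i ∈ t a) :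
    fiberCard t (S.erase (a, i)) = Function.update (fiberCard t S) a (fiberCard t S a - 1) := by
  funext a'
  by_cases h : a' = a
  · subst h
    simp [fiberCard, erase_inter, hS, hi]
  · simp [fiberCard, erase_inter, h]

end FiberCard

theorem budget_allocation_curvature_bound_general
    {A B : Type*} [Fintype A] [DecidableEq A] [Nonempty A] [Fintype B]
    (Γ : B → Finset A) (p : A → ℝ) (hp : ∀ a, p a ∈ Set.Ico (0:ℝ) 1)
    (hΓ : ∀ a : A, (Finset.univ.filter (fun b : B => a ∈ Γ b)).Nonempty)
    (c : A → ℕ)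
    (Egnd : Finset (A × ℕ))
    (hE : Egnd = Finset.univ.biUnion (fun a => {a} ×ˢ Finset.Icc 1 (c a)))
    (hne : Egnd.Nonempty)
    (f : Finset (A × ℕ) → ℝ)
    (hf : ∀ S : Finset (A × ℕ), f S = ∑ b : B,
      (1 - ∏ a ∈ Γ b, p a ^ (S ∩ ({a} ×ˢ Finset.Icc 1 (c a))).card))
    (cf : ℝ)
    (hcf : cf = 1 - Egnd.inf' hne (fun e => (f Egnd - f (Egnd.erase e)) / f {e})) :
    cf ≤ 1 - Finset.univ.inf' Finset.univ_nonempty (fun a : A =>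
      (Finset.univ.filter (fun b : B => a ∈ Γ b)).inf' (hΓ a) (fun b =>
        p a ^ (c a - 1) * ∏ a' ∈ (Γ b).erase a, p a' ^ c a')) := by
  let t : A → Finset ℕ := fun a => Icc 1 (c a)
  have hfS : ∀ S, f S = coverage Γ p (fiberCard t S) := hf
  have hcard : fiberCard t Egnd = c := by
    rw [hE, fiberCard_biUnion]
    simp [t]
  rw [hcf, sub_le_sub_iff_left]
  refine le_inf' _ _ fun ⟨a, i⟩ he => ?_
  have hi : i ∈ t a := by
    rw [hE] at he
    simpa [t] using he
  have hca : c a ≠ 0 := by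
    simp only [t, mem_Icc] at hi
    omega
  have hpa : 1 - p a ≠ 0 := (sub_pos.2 (hp a).2).ne'
  have hF : (#{b | a ∈ Γ b} : ℝ) ≠ 0 := Nat.cast_ne_zero.2 (hΓ a).card_pos.ne'
  rw [hfS, hfS, hfS, fiberCard_singleton t hi, fiberCard_erase t he hi, hcard, coverage_single,
    coverage_sub_coverage_update_pred Γ p c hca]
  refine (inf'_le _ (mem_univ a)).trans ((le_expect (hΓ a) fun b hb => inf'_le _ hb).trans_eq ?_)
  rw [expect_eq_sum_div_card]
  field_simp

theorem budget_allocation_curvature_bound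
    {A B : Type*} [Fintype A] [DecidableEq A] [Nonempty A] [Fintype B]
    (Γ : B → Finset A) (p : A → ℝ) (hp : ∀ a, p a ∈ Set.Ico (0:ℝ) 1)
    (hΓ : ∀ a : A, (Finset.univ.filter (fun b : B => a ∈ Γ b)).Nonempty)
    (c : A → ℕ) (hc : ∀ a, 1 ≤ c a)
    (Egnd : Finset (A × ℕ))
    (hE : Egnd = Finset.univ.biUnion (fun a => {a} ×ˢ Finset.Icc 1 (c a)))
    (hne : Egnd.Nonempty)
    (f : Finset (A × ℕ) → ℝ)
    (hf : ∀ S : Finset (A × ℕ), f S = ∑ b : B,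
      (1 - ∏ a ∈ Γ b, p a ^ (S ∩ ({a} ×ˢ Finset.Icc 1 (c a))).card))
    (cf : ℝ)
    (hcf : cf = 1 - Egnd.inf' hne (fun e => (f Egnd - f (Egnd.erase e)) / f {e})) :
    cf ≤ 1 - Finset.univ.inf' Finset.univ_nonempty (fun a : A =>
      (Finset.univ.filter (fun b : B => a ∈ Γ b)).inf' (hΓ a) (fun b =>
        p a ^ (c a - 1) * ∏ a' ∈ (Γ b).erase a, p a' ^ c a')) :=
  budget_allocation_curvature_bound_general Γ p hp hΓ c Egnd hE hne f hf cf hcf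
end

section
/- In the budget allocation setting where each channel can be used at most once (c(a)=1 for all a), the curvature satisfies c_f ≤ 1 - min_{b∈B} p^{|Γ(b)|-1} when p(a)=p for all a ∈ A. -/
open Finset

theorem budget_allocation_unit_capacity_curvature_bound
    {A B : Type*} [Fintype A] [DecidableEq A] [Nonempty A]
    [Fintype B] [Nonempty B]
    (Γ : B → Finset A)
    (hΓ : ∀ a : A, ∃ b : B, a ∈ Γ b)
    (p : ℝ) (hp : p ∈ Set.Ioo (0:ℝ) 1)
    (f : Finset A → ℝ)
    (hf : ∀ S : Finset A, f S = ∑ b : B, (1 - p ^ (Γ b ∩ S).card))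
    (cf : ℝ)
    (hcf : cf = 1 - Finset.univ.inf' Finset.univ_nonempty
      (fun a : A => (f Finset.univ - f (Finset.univ.erase a)) / f {a})) :
    cf ≤ 1 - Finset.univ.inf' Finset.univ_nonempty
      (fun b : B => p ^ ((Γ b).card - 1)) := by
  obtain ⟨hp0, hp1⟩ := hp
  set m := Finset.univ.inf' Finset.univ_nonempty
      (fun b : B => p ^ ((Γ b).card - 1)) with hm
  subst hcf
  have key : m ≤ Finset.univ.inf' Finset.univ_nonempty
      (fun a : A => (f Finset.univ - f (Finset.univ.erase a)) / f {a}) := by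
    apply Finset.le_inf'
    intro a _
    classical
    set T := Finset.univ.filter (fun b : B => a ∈ Γ b) with hT
    have hTne : T.Nonempty := by
      obtain ⟨b, hb⟩ := hΓ a
      exact ⟨b, by simp [hT, hb]⟩
    -- f {a}
    have hfa : f {a} = (1 - p) * T.card := by
      rw [hf]
      have : ∀ b : B, (1 : ℝ) - p ^ (Γ b ∩ ({a} : Finset A)).card =
          if a ∈ Γ b then 1 - p else 0 := by
        intro b
        by_cases h : a ∈ Γ b
        · rw [Finset.inter_singleton_of_mem h]
          simp [h]
        · rw [Finset.inter_singleton_of_notMem h]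
          simp [h]
      rw [Finset.sum_congr rfl (fun b _ => this b), ← Finset.sum_filter]
      rw [← hT, Finset.sum_const, nsmul_eq_mul, mul_comm]
    -- numerator
    have hnum : f Finset.univ - f (Finset.univ.erase a) =
        ∑ b ∈ T, (1 - p) * p ^ ((Γ b).card - 1) := by
      rw [hf, hf, ← Finset.sum_sub_distrib]
      have : ∀ b : B, (1 - p ^ (Γ b ∩ (Finset.univ : Finset A)).card) -
          (1 - p ^ (Γ b ∩ (Finset.univ.erase a)).card) =
          if a ∈ Γ b then (1 - p) * p ^ ((Γ b).card - 1) else 0 := by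
        intro b
        have hint : Γ b ∩ (Finset.univ.erase a) = (Γ b).erase a := by
          ext x; simp [and_comm]
        rw [Finset.inter_univ, hint]
        by_cases h : a ∈ Γ b
        · rw [Finset.card_erase_of_mem h]
          have hpos : 1 ≤ (Γ b).card := Finset.card_pos.mpr ⟨a, h⟩
          have : p ^ (Γ b).card = p ^ ((Γ b).card - 1) * p := by
            rw [← pow_succ, Nat.sub_add_cancel hpos]
          rw [this]
          simp [h]; ring
        · rw [Finset.erase_eq_of_notMem h]
          simp [h]
      rw [Finset.sum_congr rfl (fun b _ => this b), ← Finset.sum_filter, ← hT]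
    rw [hnum, hfa]
    have hTc : (0 : ℝ) < (1 - p) * T.card := by
      have : (0 : ℝ) < T.card := by
        exact_mod_cast Finset.card_pos.mpr hTne
      nlinarith
    rw [le_div_iff₀ hTc]
    have : m * ((1 - p) * T.card) = ∑ b ∈ T, m * (1 - p) := by
      rw [Finset.sum_const, nsmul_eq_mul]; ring
    rw [this]
    apply Finset.sum_le_sum
    intro b _
    have hmb : m ≤ p ^ ((Γ b).card - 1) := Finset.inf'_le _ (Finset.mem_univ b)
    nlinarith
  linarith
end

section
/- Let f: 2^E → ℝ≥0 be monotone submodular with multilinear extension F. Let E = E_1 ∪ ... ∪ E_k with the E_i pairwise disjoint, and let x ∈ [0,1]^E with ∑_{e∈E_i} x(e) ≤ 1 for each i. Let T be a random set formed by independently sampling at most one element from each E_i, choosing element e with probability x(e). Then E[f(T)] ≥ F(x). -/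
/-!
Both sides are expectations of `f (⋃ i, R i)` for independent samples `R i ⊆ B i`: in `F x` each
`R i` contains every element `e` of `B i` independently with probability `x e`, on the left it is
empty or a single element. By a hybrid argument it suffices to change the distribution of one
block at a time while the other blocks are fixed, with union `A`. Submodularity gives
`f (A ∪ R) ≤ f A + ∑ e ∈ R, (f (A ∪ {e}) - f A)`, whose expectation under independent sampling is
`f A + ∑ e, x e * (f (A ∪ {e}) - f A)`, which is exactly the expectation of `f (A ∪ R)` when at
most one element of the block is picked.
-/

open Finset
open scoped Classical

theorem Fin.sum_univ_pi_succ {α M : Type*} [Fintype α] [AddCommMonoid M] {k : ℕ}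
    (φ : (Fin (k + 1) → α) → M) :
    ∑ σ, φ σ = ∑ a, ∑ τ : Fin k → α, φ (Fin.cons a τ) := by
  rw [← Fintype.sum_prod_type']
  exact (Fintype.sum_equiv (Fin.consEquiv fun _ => α) _ _ fun _ => rfl).symm

theorem sum_prod_mul_le_of_forall_update {α : Type*} [Fintype α] {k : ℕ}
    (μ ν : Fin k → α → ℝ) (hμ : ∀ i a, 0 ≤ μ i a) (hν : ∀ i a, 0 ≤ ν i a)
    (g : (Fin k → α) → ℝ)
    (hg : ∀ i σ, ∑ a, μ i a * g (Function.update σ i a) ≤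
      ∑ a, ν i a * g (Function.update σ i a)) :
    ∑ σ, (∏ i, μ i (σ i)) * g σ ≤ ∑ σ, (∏ i, ν i (σ i)) * g σ := by
  induction k with
  | zero => simp
  | succ k ih =>
    let g' (b : α → ℝ) (τ : Fin k → α) : ℝ := ∑ a, b a * g (Fin.cons a τ)
    have hg' : ∀ τ, g' (μ 0) τ ≤ g' (ν 0) τ := fun τ => by
      rcases isEmpty_or_nonempty α with hα | ⟨⟨a₀⟩⟩
      · simp [g']
      · simpa only [Fin.update_cons_zero] using hg 0 (Fin.cons a₀ τ)
    calc ∑ σ, (∏ i, μ i (σ i)) * g σ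
        = ∑ τ : Fin k → α, (∏ i, μ i.succ (τ i)) * g' (μ 0) τ := by
          simp only [Fin.sum_univ_pi_succ, Fin.prod_univ_succ, Fin.cons_zero, Fin.cons_succ, g',
            mul_sum]
          rw [sum_comm]
          refine sum_congr rfl fun _ _ => sum_congr rfl fun _ _ => by ring
      _ ≤ ∑ τ : Fin k → α, (∏ i, ν i.succ (τ i)) * g' (μ 0) τ := by
          refine ih _ _ (fun i => hμ i.succ) (fun i => hν i.succ) _ fun i τ => ?_
          simp only [g', mul_sum]
          rw [sum_comm, sum_comm (s := univ) (t := univ) (f := fun _ _ => ν _ _ * _)]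
          refine sum_le_sum fun a _ => ?_
          simp only [← mul_left_comm (μ 0 a), ← mul_sum, Fin.cons_update]
          exact mul_le_mul_of_nonneg_left (hg i.succ (Fin.cons a τ)) (hμ 0 a)
      _ ≤ ∑ τ : Fin k → α, (∏ i, ν i.succ (τ i)) * g' (ν 0) τ :=
          sum_le_sum fun τ _ => mul_le_mul_of_nonneg_left (hg' τ)
            (prod_nonneg fun i _ => hν i.succ (τ i))
      _ = ∑ σ, (∏ i, ν i (σ i)) * g σ := by
          simp only [Fin.sum_univ_pi_succ, Fin.prod_univ_succ, Fin.cons_zero, Fin.cons_succ, g',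
            mul_sum]
          rw [sum_comm]
          refine sum_congr rfl fun _ _ => sum_congr rfl fun _ _ => by ring

section BlockWeights

variable {E : Type*} [DecidableEq E] (x : E → ℝ)

noncomputable def indepWeight (s R : Finset E) : ℝ :=
  if R ⊆ s then (∏ e ∈ R, x e) * ∏ e ∈ s \ R, (1 - x e) else 0

noncomputable def pickOneWeight (s R : Finset E) : ℝ :=
  (if R = ∅ then 1 - ∑ e ∈ s, x e else 0) + ∑ e ∈ s, if R = {e} then x e else 0

variable {x}

lemma indepWeight_nonneg {s : Finset E} (hx0 : ∀ e ∈ s, 0 ≤ x e) (hx1 : ∀ e ∈ s, x e ≤ 1)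
    (R : Finset E) : 0 ≤ indepWeight x s R := by
  unfold indepWeight
  split_ifs with hR
  · exact mul_nonneg (prod_nonneg fun e he => hx0 e (hR he))
      (prod_nonneg fun e he => sub_nonneg.2 (hx1 e (mem_sdiff.1 he).1))
  · exact le_rfl

lemma pickOneWeight_nonneg {s : Finset E} (hx0 : ∀ e ∈ s, 0 ≤ x e) (hs : ∑ e ∈ s, x e ≤ 1)
    (R : Finset E) : 0 ≤ pickOneWeight x s R := by
  unfold pickOneWeight
  refine add_nonneg ?_ (sum_nonneg fun e he => ?_)
  · split_ifs <;> linarith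
  · split_ifs <;> linarith [hx0 e he]

lemma sum_powerset_insert_indepWeight_mul {a : E} {s : Finset E} (ha : a ∉ s)
    (g : Finset E → ℝ) :
    ∑ R ∈ (insert a s).powerset, indepWeight x (insert a s) R * g R =
      (1 - x a) * ∑ R ∈ s.powerset, indepWeight x s R * g R +
        x a * ∑ R ∈ s.powerset, indepWeight x s R * g (insert a R) := by
  rw [sum_powerset_insert ha, mul_sum, mul_sum]
  congr 1 <;> refine sum_congr rfl fun R hR => ?_ <;> rw [mem_powerset] at hR
  · have haR : a ∉ R := fun h => ha (hR h)
    rw [indepWeight, if_pos (hR.trans (subset_insert a s)), indepWeight, if_pos hR,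
      insert_sdiff_of_notMem _ haR, prod_insert fun h => ha (mem_sdiff.1 h).1]
    ring
  · have haR : a ∉ R := fun h => ha (hR h)
    rw [indepWeight, if_pos (insert_subset_insert a hR), indepWeight, if_pos hR,
      insert_sdiff_insert, sdiff_insert_of_notMem ha, prod_insert haR]
    ring

lemma sum_powerset_indepWeight (s : Finset E) : ∑ R ∈ s.powerset, indepWeight x s R = 1 := by
  induction s using Finset.induction_on with
  | empty => simp [indepWeight]
  | insert a s ha ih =>
    simpa only [mul_one, ih, sub_add_cancel] using
      sum_powerset_insert_indepWeight_mul (x := x) ha fun _ => 1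

lemma sum_powerset_indepWeight_mul_sum (c : E → ℝ) (s : Finset E) :
    ∑ R ∈ s.powerset, indepWeight x s R * ∑ e ∈ R, c e = ∑ e ∈ s, x e * c e := by
  induction s using Finset.induction_on with
  | empty => simp
  | insert a s ha ih =>
    have hins : ∑ R ∈ s.powerset, indepWeight x s R * ∑ e ∈ insert a R, c e =
        c a + ∑ e ∈ s, x e * c e := by
      rw [← ih, ← mul_one (c a), ← sum_powerset_indepWeight (x := x) s, mul_sum, ← sum_add_distrib]
      refine sum_congr rfl fun R hR => ?_
      rw [sum_insert fun h => ha (mem_powerset.1 hR h)]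
      ring
    rw [sum_powerset_insert_indepWeight_mul ha, ih, hins, sum_insert ha]
    ring

lemma sum_pickOneWeight_mul [Fintype E] (s : Finset E) (g : Finset E → ℝ) :
    ∑ R, pickOneWeight x s R * g R = (1 - ∑ e ∈ s, x e) * g ∅ + ∑ e ∈ s, x e * g {e} := by
  simp only [pickOneWeight, add_mul, sum_add_distrib, sum_mul, ite_mul, zero_mul, sum_ite_eq',
    mem_univ, if_true]
  rw [sum_comm]
  simp [sum_ite_eq']

lemma sum_indepWeight_mul [Fintype E] (s : Finset E) (g : Finset E → ℝ) :
    ∑ R, indepWeight x s R * g R = ∑ R ∈ s.powerset, indepWeight x s R * g R :=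
  (sum_subset (subset_univ _) fun R _ hR => by
    rw [indepWeight, if_neg (by simpa using hR), zero_mul]).symm

lemma le_add_sum_sub_of_submodular {f : Finset E → ℝ}
    (hsub : ∀ S T : Finset E, f S + f T ≥ f (S ∩ T) + f (S ∪ T)) (A R : Finset E) :
    f (A ∪ R) ≤ f A + ∑ e ∈ R, (f (A ∪ {e}) - f A) := by
  induction R using Finset.induction_on with
  | empty => simp
  | insert a R ha ih =>
    have hinter : (A ∪ R) ∩ (A ∪ {a}) = A := by grind
    have hunion : (A ∪ R) ∪ (A ∪ {a}) = A ∪ insert a R := by grind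
    have := hsub (A ∪ R) (A ∪ {a})
    rw [hinter, hunion] at this
    rw [sum_insert ha]
    linarith

lemma sum_indepWeight_mul_le_sum_pickOneWeight_mul [Fintype E] {f : Finset E → ℝ}
    (hsub : ∀ S T : Finset E, f S + f T ≥ f (S ∩ T) + f (S ∪ T)) {s : Finset E}
    (hx0 : ∀ e ∈ s, 0 ≤ x e) (hs : ∑ e ∈ s, x e ≤ 1) (A : Finset E) :
    ∑ R, indepWeight x s R * f (A ∪ R) ≤ ∑ R, pickOneWeight x s R * f (A ∪ R) := by
  have hx1 : ∀ e ∈ s, x e ≤ 1 := fun e he => (single_le_sum hx0 he).trans hs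
  calc ∑ R, indepWeight x s R * f (A ∪ R)
      = ∑ R ∈ s.powerset, indepWeight x s R * f (A ∪ R) := sum_indepWeight_mul s _
    _ ≤ ∑ R ∈ s.powerset, indepWeight x s R * (f A + ∑ e ∈ R, (f (A ∪ {e}) - f A)) :=
        sum_le_sum fun R _ => mul_le_mul_of_nonneg_left (le_add_sum_sub_of_submodular hsub A R)
          (indepWeight_nonneg hx0 hx1 R)
    _ = f A + ∑ e ∈ s, x e * (f (A ∪ {e}) - f A) := by
        simp only [mul_add, sum_add_distrib, ← sum_mul, sum_powerset_indepWeight, one_mul,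
          sum_powerset_indepWeight_mul_sum]
    _ = ∑ R, pickOneWeight x s R * f (A ∪ R) := by
        simp only [sum_pickOneWeight_mul, union_empty, mul_sub, sum_sub_distrib, ← sum_mul]
        ring

lemma pickOneWeight_toFinset {s : Finset E} {o : Option E} (ho : ∀ e ∈ o, e ∈ s) :
    pickOneWeight x s o.toFinset = o.elim (1 - ∑ e ∈ s, x e) x := by
  cases o with
  | none => simp [pickOneWeight]
  | some e => simp [pickOneWeight, sum_ite_eq, ho e rfl]

lemma pickOneWeight_eq_zero {s R : Finset E} (h0 : R ≠ ∅) (h1 : ∀ e ∈ s, R ≠ {e}) :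
    pickOneWeight x s R = 0 := by
  simp only [pickOneWeight, if_neg h0, zero_add]
  exact sum_eq_zero fun e he => if_neg (h1 e he)

end BlockWeights

lemma Option.toFinset_injective {α : Type*} :
    Function.Injective (Option.toFinset : Option α → Finset α)
  | none, none, _ => rfl
  | some a, some b, h => by simpa using h
  | none, some _, h | some _, none, h => by simp at h

lemma Finset.biUnion_update {ι E : Type*} [Fintype ι] [DecidableEq ι] [DecidableEq E]
    (σ : ι → Finset E) (i : ι) (R : Finset E) :
    univ.biUnion (Function.update σ i R) = (univ.erase i).biUnion σ ∪ R := by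
  ext e
  simp only [mem_biUnion, mem_univ, true_and, mem_union, mem_erase, Function.update_apply]
  constructor
  · rintro ⟨j, hj⟩
    by_cases hji : j = i
    · exact Or.inr (by simpa [hji] using hj)
    · exact Or.inl ⟨j, ⟨hji, trivial⟩, by simpa [hji] using hj⟩
  · rintro (⟨j, ⟨hji, -⟩, hj⟩ | he)
    · exact ⟨j, by simpa [hji] using hj⟩
    · exact ⟨i, by simpa using he⟩

section Blocks

variable {ι E M : Type*} [Fintype ι] [DecidableEq E] [CommMonoid M] {B : ι → Finset E}

lemma biUnion_inter_blocks [Fintype E] (hcover : univ.biUnion B = univ) (S : Finset E) :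
    univ.biUnion (fun i => S ∩ B i) = S := by
  rw [← inter_biUnion, hcover, inter_univ]

lemma prod_eq_prod_blocks [Fintype E] (hdisj : ∀ i j : ι, i ≠ j → Disjoint (B i) (B j))
    (hcover : univ.biUnion B = univ) (S : Finset E) (φ : E → M) :
    ∏ e ∈ S, φ e = ∏ i, ∏ e ∈ S ∩ B i, φ e := by
  conv_lhs => rw [← biUnion_inter_blocks hcover S]
  exact prod_biUnion fun i _ j _ hij => (hdisj i j hij).mono inter_subset_right inter_subset_right

lemma biUnion_inter_block_of_subset (hdisj : ∀ i j : ι, i ≠ j → Disjoint (B i) (B j))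
    {σ : ι → Finset E} (hσ : ∀ i, σ i ⊆ B i) (i : ι) :
    univ.biUnion σ ∩ B i = σ i := by
  ext e
  simp only [mem_inter, mem_biUnion, mem_univ, true_and]
  refine ⟨fun ⟨⟨j, hj⟩, hi⟩ => ?_, fun he => ⟨⟨i, he⟩, hσ i he⟩⟩
  obtain rfl : j = i := by
    by_contra hji
    exact disjoint_left.1 (hdisj j i hji) (hσ j hj) hi
  exact hj

variable [Fintype E]

lemma multilinear_eq_sum_prod_indepWeight [DecidableEq ι]
    (hdisj : ∀ i j : ι, i ≠ j → Disjoint (B i) (B j))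
    (hcover : univ.biUnion B = univ) (x : E → ℝ) (g : Finset E → ℝ) :
    ∑ S, g S * (∏ e ∈ S, x e) * ∏ e ∈ Sᶜ, (1 - x e) =
      ∑ σ : ι → Finset E, (∏ i, indepWeight x (B i) (σ i)) * g (univ.biUnion σ) := by
  refine sum_of_injOn (fun S i => S ∩ B i) (fun S _ T _ hST => ?_) (fun _ _ => mem_univ _)
    (fun σ _ hσ => ?_) (fun S _ => ?_)
  · simpa only [biUnion_inter_blocks hcover] using congrArg (univ.biUnion ·) hST
  · obtain ⟨i, hi⟩ : ∃ i, ¬ σ i ⊆ B i := by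
      by_contra! h
      exact hσ ⟨univ.biUnion σ, by simp, funext (biUnion_inter_block_of_subset hdisj h)⟩
    rw [prod_eq_zero (mem_univ i) (if_neg hi), zero_mul]
  · have hcompl : ∀ i, Sᶜ ∩ B i = B i \ (S ∩ B i) := fun i => by grind [mem_compl]
    simp only [biUnion_inter_blocks hcover, indepWeight, inter_subset_right, if_true,
      prod_mul_distrib, prod_eq_prod_blocks hdisj hcover S, prod_eq_prod_blocks hdisj hcover Sᶜ,
      hcompl]
    ring

lemma sum_pickOne_eq_sum_prod_pickOneWeight [DecidableEq ι]
    [DecidablePred fun σ : ι → Option E => ∀ (i : ι) (e : E), σ i = some e → e ∈ B i]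
    [∀ σ : ι → Option E, DecidablePred fun e => ∃ i, σ i = some e]
    (x : E → ℝ) (g : Finset E → ℝ) :
    ∑ σ ∈ (univ : Finset (ι → Option E)).filter
        (fun σ => ∀ (i : ι) (e : E), σ i = some e → e ∈ B i),
      (∏ i : ι, Option.elim (σ i) (1 - ∑ e ∈ B i, x e) (fun e => x e)) *
        g (univ.filter (fun e => ∃ i, σ i = some e)) =
      ∑ τ : ι → Finset E, (∏ i, pickOneWeight x (B i) (τ i)) * g (univ.biUnion τ) := by
  refine sum_of_injOn (fun σ i => (σ i).toFinset) (fun σ _ σ' _ hσσ' => funext fun i => ?_)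
    (fun _ _ => mem_univ _) (fun τ _ hτ => ?_) (fun σ hσ => ?_)
  · exact Option.toFinset_injective (congrFun hσσ' i)
  · obtain ⟨i, h0, h1⟩ : ∃ i, τ i ≠ ∅ ∧ ∀ e ∈ B i, τ i ≠ {e} := by
      by_contra! h
      have hτo : ∀ i, ∃ o : Option E, (∀ e ∈ o, e ∈ B i) ∧ o.toFinset = τ i := fun i => by
        by_cases hi : τ i = ∅
        · exact ⟨none, by simp, hi.symm⟩
        · obtain ⟨e, he, hτe⟩ := h i (nonempty_iff_ne_empty.2 hi)
          exact ⟨some e, by simpa using he, hτe.symm⟩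
      choose σ hσB hσ using hτo
      exact hτ ⟨σ, mem_filter.2 ⟨mem_univ _, hσB⟩, funext hσ⟩
    rw [prod_eq_zero (mem_univ i) (pickOneWeight_eq_zero h0 h1), zero_mul]
  · have hfilter :
        univ.filter (fun e => ∃ i, σ i = some e) = univ.biUnion fun i => (σ i).toFinset := by
      ext e
      simp
    rw [hfilter, prod_congr rfl fun i _ => pickOneWeight_toFinset ((mem_filter.1 hσ).2 i)]

end Blocks

theorem rounding_one_per_block_general
    {E : Type*} [Fintype E] [DecidableEq E]
    (k : ℕ) (B : Fin k → Finset E)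
    (hdisj : ∀ i j : Fin k, i ≠ j → Disjoint (B i) (B j))
    (hcover : Finset.univ.biUnion B = (Finset.univ : Finset E))
    (f : Finset E → ℝ)
    (hsub : ∀ S T : Finset E, f S + f T ≥ f (S ∩ T) + f (S ∪ T))
    (x : E → ℝ) (hx : ∀ e, 0 ≤ x e)
    (hx1 : ∀ i : Fin k, ∑ e ∈ B i, x e ≤ 1)
    (F : (E → ℝ) → ℝ)
    (hF : ∀ z : E → ℝ, F z = ∑ S : Finset E,
      f S * (∏ e ∈ S, z e) * ∏ e ∈ Sᶜ, (1 - z e)) :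
    ∑ σ ∈ (Finset.univ : Finset (Fin k → Option E)).filter
        (fun σ => ∀ (i : Fin k) (e : E), σ i = some e → e ∈ B i),
      (∏ i : Fin k, Option.elim (σ i) (1 - ∑ e ∈ B i, x e) (fun e => x e)) *
        f (Finset.univ.filter (fun e => ∃ i, σ i = some e))
    ≥ F x := by
  rw [ge_iff_le, hF, multilinear_eq_sum_prod_indepWeight hdisj hcover,
    sum_pickOne_eq_sum_prod_pickOneWeight]
  refine sum_prod_mul_le_of_forall_update _ _
    (fun i => indepWeight_nonneg (fun e _ => hx e)
      fun e he => (single_le_sum (fun e _ => hx e) he).trans (hx1 i))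
    (fun i => pickOneWeight_nonneg (fun e _ => hx e) (hx1 i)) _ fun i σ => ?_
  simp only [Finset.biUnion_update]
  exact sum_indepWeight_mul_le_sum_pickOneWeight_mul hsub (fun e _ => hx e) (hx1 i) _

theorem rounding_one_per_block
    {E : Type*} [Fintype E] [DecidableEq E]
    (k : ℕ) (B : Fin k → Finset E)
    (hdisj : ∀ i j : Fin k, i ≠ j → Disjoint (B i) (B j))
    (hcover : Finset.univ.biUnion B = (Finset.univ : Finset E))
    (f : Finset E → ℝ) (hnn : ∀ S, 0 ≤ f S)
    (hmono : ∀ S T : Finset E, S ⊆ T → f S ≤ f T)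
    (hsub : ∀ S T : Finset E, f S + f T ≥ f (S ∩ T) + f (S ∪ T))
    (x : E → ℝ) (hx : ∀ e, 0 ≤ x e)
    (hx1 : ∀ i : Fin k, ∑ e ∈ B i, x e ≤ 1)
    (F : (E → ℝ) → ℝ)
    (hF : ∀ z : E → ℝ, F z = ∑ S : Finset E,
      f S * (∏ e ∈ S, z e) * ∏ e ∈ Sᶜ, (1 - z e)) :
    ∑ σ ∈ (Finset.univ : Finset (Fin k → Option E)).filter
        (fun σ => ∀ (i : Fin k) (e : E), σ i = some e → e ∈ B i),
      (∏ i : Fin k, Option.elim (σ i) (1 - ∑ e ∈ B i, x e) (fun e => x e)) *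
        f (Finset.univ.filter (fun e => ∃ i, σ i = some e))
    ≥ F x :=
  rounding_one_per_block_general k B hdisj hcover f hsub x hx hx1 F hF
end

section
/- Let F be the multilinear extension of a monotone submodular f, and x ∈ [0,1]^E with (1-ε)x ∈ [0,1]^E for ε ∈ [0,1]. Then F((1-ε)·x) ≥ (1-ε)·F(x). -/
/-!
Let `R(x)` contain each `e` independently with probability `x e`, so `F x = 𝔼[f(R(x))]`.
Keeping each element of `R(x)` independently with probability `1 - ε` yields `R((1 - ε) x)`,
so `F((1 - ε) x) = 𝔼[g(R(x))]` where `g S` is the mean of `f` over the `(1 - ε)`-subsamples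
of `S`. Submodularity and `f ∅ = 0` give `g S ≥ (1 - ε) f S` by induction on `S`: adding an
element `a` raises `g` by at least `(1 - ε)` times the marginal gain of `a` at `S`, because
the gain at a subsample of `S` is at least the gain at `S`.
-/

open Finset

section Subsample

variable {R : Type*} [CommRing R] {E : Type*} [DecidableEq E]

lemma sum_powerset_pow_mul_one_sub_pow_card_sdiff (p : R) (S : Finset E) :
    ∑ T ∈ S.powerset, p ^ #T * (1 - p) ^ #(S \ T) = 1 := by
  simpa using (prod_add (fun _ => p) (fun _ => 1 - p) S).symm

variable [LinearOrder R] [IsStrictOrderedRing R] {f : Finset E → R}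

lemma sub_le_sub_insert_of_submodular
    (hsub : ∀ S T : Finset E, f S + f T ≥ f (S ∩ T) + f (S ∪ T))
    {S T : Finset E} (hTS : T ⊆ S) {a : E} (ha : a ∉ S) :
    f (insert a S) - f S ≤ f (insert a T) - f T := by
  have h := hsub (insert a T) S
  rw [insert_inter_of_notMem ha, inter_eq_left.mpr hTS, insert_union,
    union_eq_right.mpr hTS] at h
  linarith

theorem mul_le_sum_powerset_of_submodular
    (hsub : ∀ S T : Finset E, f S + f T ≥ f (S ∩ T) + f (S ∪ T)) (hempty : f ∅ = 0)
    {p : R} (hp0 : 0 ≤ p) (hp1 : p ≤ 1) (S : Finset E) :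
    p * f S ≤ ∑ T ∈ S.powerset, p ^ #T * (1 - p) ^ #(S \ T) * f T := by
  induction S using Finset.induction_on with
  | empty => simp [hempty]
  | insert a S ha ih =>
    set w : Finset E → R := fun T => p ^ #T * (1 - p) ^ #(S \ T) with hw
    have hsplit : ∑ T ∈ (insert a S).powerset, p ^ #T * (1 - p) ^ #(insert a S \ T) * f T
        = (1 - p) * ∑ T ∈ S.powerset, w T * f T
          + p * ∑ T ∈ S.powerset, w T * f (insert a T) := by
      rw [sum_powerset_insert ha, mul_sum, mul_sum]
      congr 1 <;> refine sum_congr rfl fun T hT => ?_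
      · have haT : a ∉ T := notMem_mono (mem_powerset.1 hT) ha
        rw [insert_sdiff_of_notMem _ haT, card_insert_of_notMem (by simp [ha])]
        ring
      · have haT : a ∉ T := notMem_mono (mem_powerset.1 hT) ha
        rw [insert_sdiff_insert, sdiff_insert_of_notMem ha, card_insert_of_notMem haT]
        ring
    have hgain : ∑ T ∈ S.powerset, w T * f T + (f (insert a S) - f S)
        ≤ ∑ T ∈ S.powerset, w T * f (insert a T) :=
      calc ∑ T ∈ S.powerset, w T * f T + (f (insert a S) - f S)
          = ∑ T ∈ S.powerset, w T * (f T + (f (insert a S) - f S)) := by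
            simp only [mul_add, sum_add_distrib, ← sum_mul, hw,
              sum_powerset_pow_mul_one_sub_pow_card_sdiff, one_mul]
        _ ≤ ∑ T ∈ S.powerset, w T * f (insert a T) := by
          refine sum_le_sum fun T hT => mul_le_mul_of_nonneg_left ?_ ?_
          · linarith [sub_le_sub_insert_of_submodular hsub (mem_powerset.1 hT) ha]
          · exact mul_nonneg (pow_nonneg hp0 _) (pow_nonneg (sub_nonneg.2 hp1) _)
    rw [hsplit]
    nlinarith [mul_le_mul_of_nonneg_left hgain hp0]

end Subsample

section Multilinear

variable {E : Type*} [Fintype E] [DecidableEq E]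

lemma sum_sum_powerset_compl {M : Type*} [AddCommMonoid M] (g : Finset E → Finset E → M) :
    ∑ T, ∑ U ∈ Tᶜ.powerset, g T U = ∑ S, ∑ T ∈ S.powerset, g T (S \ T) := by
  rw [sum_sigma', sum_sigma']
  refine sum_nbij' (fun a => ⟨a.1 ∪ a.2, a.1⟩) (fun b => ⟨b.2, b.1 \ b.2⟩) ?_ ?_ ?_ ?_ ?_
  · rintro ⟨T, U⟩ -
    simp only [mem_sigma, mem_univ, mem_powerset, true_and]
    exact subset_union_left
  · rintro ⟨S, T⟩ hTS
    simp_all [subset_compl_iff_disjoint_left, disjoint_sdiff]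
  · rintro ⟨T, U⟩ hTU
    simp_all [subset_compl_iff_disjoint_left, union_sdiff_cancel_left]
  · rintro ⟨S, T⟩ hTS
    simp_all
  · rintro ⟨T, U⟩ hTU
    simp_all [subset_compl_iff_disjoint_left, union_sdiff_cancel_left]

variable {R : Type*} [CommRing R]

lemma prod_mul_prod_compl_one_sub_mul (c : R) (x : E → R) (T : Finset E) :
    (∏ e ∈ T, c * x e) * ∏ e ∈ Tᶜ, (1 - c * x e)
      = ∑ U ∈ Tᶜ.powerset, c ^ #T * (1 - c) ^ #U
          * ((∏ e ∈ T ∪ U, x e) * ∏ e ∈ (T ∪ U)ᶜ, (1 - x e)) := by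
  have hsplit : ∀ e, 1 - c * x e = (1 - c) * x e + (1 - x e) := fun e => by ring
  simp_rw [hsplit, prod_add, mul_sum]
  refine sum_congr rfl fun U hU => ?_
  have hdisj : Disjoint T U := subset_compl_iff_disjoint_left.1 (mem_powerset.1 hU)
  rw [prod_union hdisj, compl_union, ← sdiff_eq_inter_compl]
  simp only [prod_mul_distrib, prod_const]
  ring

theorem sum_mul_prod_mul_prod_compl_one_sub_mul (f : Finset E → R) (c : R) (x : E → R) :
    ∑ T, f T * ((∏ e ∈ T, c * x e) * ∏ e ∈ Tᶜ, (1 - c * x e))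
      = ∑ S, (∑ T ∈ S.powerset, c ^ #T * (1 - c) ^ #(S \ T) * f T)
          * ((∏ e ∈ S, x e) * ∏ e ∈ Sᶜ, (1 - x e)) := by
  simp_rw [prod_mul_prod_compl_one_sub_mul, mul_sum]
  rw [sum_sum_powerset_compl]
  simp_rw [sum_mul]
  refine sum_congr rfl fun S _ => sum_congr rfl fun T hT => ?_
  rw [union_sdiff_of_subset (mem_powerset.1 hT)]
  ring

end Multilinear

theorem multilinear_scaling_lower_bound_general
    {E : Type*} [Fintype E] [DecidableEq E]
    (f : Finset E → ℝ)
    (hsub : ∀ S T : Finset E, f S + f T ≥ f (S ∩ T) + f (S ∪ T))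
    (hempty : f ∅ = 0)
    (F : (E → ℝ) → ℝ)
    (hF : ∀ z : E → ℝ, F z = ∑ S : Finset E,
      f S * (∏ e ∈ S, z e) * ∏ e ∈ Sᶜ, (1 - z e))
    (x : E → ℝ) (hx : ∀ e, x e ∈ Set.Icc (0:ℝ) 1)
    (ε : ℝ) (hε : ε ∈ Set.Icc (0:ℝ) 1) :
    F (fun e => (1 - ε) * x e) ≥ (1 - ε) * F x := by
  obtain ⟨hε0, hε1⟩ := hε
  simp only [hF, mul_assoc, ge_iff_le, mul_sum]
  rw [sum_mul_prod_mul_prod_compl_one_sub_mul]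
  refine sum_le_sum fun S _ => ?_
  rw [← mul_assoc]
  refine mul_le_mul_of_nonneg_right
    (mul_le_sum_powerset_of_submodular hsub hempty (by linarith) (by linarith) S) ?_
  exact mul_nonneg (prod_nonneg fun e _ => (hx e).1) (prod_nonneg fun e _ => sub_nonneg.2 (hx e).2)

theorem multilinear_scaling_lower_bound
    {E : Type*} [Fintype E] [DecidableEq E]
    (f : Finset E → ℝ) (hnn : ∀ S, 0 ≤ f S)
    (hmono : ∀ S T : Finset E, S ⊆ T → f S ≤ f T)
    (hsub : ∀ S T : Finset E, f S + f T ≥ f (S ∩ T) + f (S ∪ T))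
    (hempty : f ∅ = 0)
    (F : (E → ℝ) → ℝ)
    (hF : ∀ z : E → ℝ, F z = ∑ S : Finset E,
      f S * (∏ e ∈ S, z e) * ∏ e ∈ Sᶜ, (1 - z e))
    (x : E → ℝ) (hx : ∀ e, x e ∈ Set.Icc (0:ℝ) 1)
    (ε : ℝ) (hε : ε ∈ Set.Icc (0:ℝ) 1) :
    F (fun e => (1 - ε) * x e) ≥ (1 - ε) * F x :=
  multilinear_scaling_lower_bound_general f hsub hempty F hF x hx ε hε
end
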